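/- Fix 0 < z₁ < z < z₂ with (√z₁ + √z₂)/2 > √z (which holds when √z₁, √z, √z₂ are quantiles Φ⁻¹(1−(α+ε)/2), Φ⁻¹(1−α/2), Φ⁻¹(1−(α−ε)/2) by convexity of the normal quantile function above 1/2). Then the ratio [G(z₂;λ) − G(z₁;λ)] / G(z;λ) tends to +∞ as λ → ∞, where G(·;λ) is the noncentral χ²₁(λ) CDF. Consequently, no level bound of the form [G(z₂;λ)−G(z₁;λ)]/G(z;λ) ≤ C can hold for all λ ≥ 0. -/

import Mathlib

open MeasureTheory ProbabilityTheory Real Set Filter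

/-- Standard normal density. -/
noncomputable def stdNormalPDF (x : ℝ) : ℝ :=
  (Real.sqrt (2 * Real.pi))⁻¹ * Real.exp (-(x ^ 2) / 2)

/-- Standard normal CDF. -/
noncomputable def stdNormalCDF (x : ℝ) : ℝ :=
  ∫ t in Set.Iic x, stdNormalPDF t

/-- Density of the noncentral chi-square distribution with 1 degree of freedom
and noncentrality `l`, i.e. the density of `X²` with `X ~ N(√l, 1)`. -/
noncomputable def ncChiSqPDF (l v : ℝ) : ℝ :=
  if 0 < v then
    (2 * Real.sqrt v)⁻¹ *
      (stdNormalPDF (Real.sqrt v - Real.sqrt l) + stdNormalPDF (Real.sqrt v + Real.sqrt l))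
  else 0

/-- CDF of the noncentral chi-square distribution with 1 degree of freedom
and noncentrality `l`. -/
noncomputable def ncChiSqCDF (l v : ℝ) : ℝ :=
  stdNormalCDF (Real.sqrt l + Real.sqrt v) - stdNormalCDF (Real.sqrt l - Real.sqrt v)

lemma stdNormalPDF_pos (x : ℝ) : 0 < stdNormalPDF x := by
  unfold stdNormalPDF
  have : 0 < Real.sqrt (2 * Real.pi) := Real.sqrt_pos.mpr (by positivity)
  positivity

lemma stdNormalPDF_anti {u v : ℝ} (h0 : 0 ≤ u) (huv : u ≤ v) :
    stdNormalPDF v ≤ stdNormalPDF u := by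
  unfold stdNormalPDF
  have : 0 ≤ (Real.sqrt (2 * Real.pi))⁻¹ := by positivity
  have h : Real.exp (-(v ^ 2) / 2) ≤ Real.exp (-(u ^ 2) / 2) :=
    Real.exp_le_exp.mpr (by nlinarith)
  exact mul_le_mul_of_nonneg_left h this

lemma integrable_stdNormalPDF : Integrable stdNormalPDF := by
  have h : Integrable (fun x : ℝ => Real.exp (-(2⁻¹ : ℝ) * x ^ 2)) :=
    integrable_exp_neg_mul_sq (by norm_num)
  have h2 := h.const_mul (Real.sqrt (2 * Real.pi))⁻¹
  refine h2.congr (Filter.Eventually.of_forall fun x => ?_)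
  unfold stdNormalPDF
  simp only []
  rw [show -(x ^ 2) / 2 = -(2⁻¹ : ℝ) * x ^ 2 by ring]

lemma stdNormalCDF_sub (a b : ℝ) (hab : a ≤ b) :
    stdNormalCDF b - stdNormalCDF a = ∫ x in Set.Ioc a b, stdNormalPDF x := by
  unfold stdNormalCDF
  rw [intervalIntegral.integral_Iic_sub_Iic integrable_stdNormalPDF.integrableOn
    integrable_stdNormalPDF.integrableOn, intervalIntegral.integral_of_le hab]

lemma intIoc_const (a b c : ℝ) (hab : a ≤ b) :
    (∫ _ in Set.Ioc a b, c) = (b - a) * c := by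
  rw [MeasureTheory.setIntegral_const, Real.volume_real_Ioc_of_le hab, smul_eq_mul]

lemma intIoc_le (a b : ℝ) (h0 : 0 ≤ a) (hab : a ≤ b) :
    (∫ x in Set.Ioc a b, stdNormalPDF x) ≤ (b - a) * stdNormalPDF a := by
  rw [← intIoc_const a b _ hab]
  refine MeasureTheory.setIntegral_mono_on integrable_stdNormalPDF.integrableOn
    (MeasureTheory.integrableOn_const measure_Ioc_lt_top.ne) measurableSet_Ioc
    fun x hx => stdNormalPDF_anti h0 hx.1.le

lemma le_intIoc (a b : ℝ) (h0 : 0 ≤ a) (hab : a ≤ b) :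
    (b - a) * stdNormalPDF b ≤ ∫ x in Set.Ioc a b, stdNormalPDF x := by
  rw [← intIoc_const a b _ hab]
  refine MeasureTheory.setIntegral_mono_on
    (MeasureTheory.integrableOn_const measure_Ioc_lt_top.ne)
    integrable_stdNormalPDF.integrableOn measurableSet_Ioc
    fun x hx => stdNormalPDF_anti (h0.trans hx.1.le) hx.2

lemma stdNormalCDF_mono : Monotone stdNormalCDF := by
  intro a b hab
  have h := stdNormalCDF_sub a b hab
  have : 0 ≤ ∫ x in Set.Ioc a b, stdNormalPDF x :=
    MeasureTheory.setIntegral_nonneg measurableSet_Ioc fun x _ => (stdNormalPDF_pos x).le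
  linarith

lemma tendsto_sqrt_atTop' : Tendsto Real.sqrt atTop atTop := by
  refine tendsto_atTop.2 fun b => ?_
  filter_upwards [eventually_ge_atTop (b ^ 2)] with l h1
  calc b ≤ |b| := le_abs_self b
    _ = Real.sqrt (b ^ 2) := (Real.sqrt_sq_eq_abs b).symm
    _ ≤ Real.sqrt l := Real.sqrt_le_sqrt h1

/-- The ratio [G(z₂;λ)−G(z₁;λ)]/G(z;λ) tends to +∞ as λ → ∞, so no uniform level bound
can hold. -/
theorem ratio_tendsto_atTop (z₁ z z₂ : ℝ) (h1 : 0 < z₁) (h2 : z₁ < z) (h3 : z < z₂)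
    (hmid : Real.sqrt z < (Real.sqrt z₁ + Real.sqrt z₂) / 2) :
    Tendsto (fun l : ℝ => (ncChiSqCDF l z₂ - ncChiSqCDF l z₁) / ncChiSqCDF l z) atTop atTop ∧
    ∀ C : ℝ, ¬ (∀ l : ℝ, 0 ≤ l →
      (ncChiSqCDF l z₂ - ncChiSqCDF l z₁) / ncChiSqCDF l z ≤ C) := by
  set s₁ := Real.sqrt z₁ with hs₁
  set s := Real.sqrt z with hs
  set s₂ := Real.sqrt z₂ with hs₂
  set m := (s₁ + s₂) / 2 with hm
  have hs₁pos : 0 < s₁ := Real.sqrt_pos.mpr h1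
  have hs₁s : s₁ < s := Real.sqrt_lt_sqrt h1.le h2
  have hss₂ : s < s₂ := Real.sqrt_lt_sqrt (by linarith) h3
  have hspos : 0 < s := hs₁pos.trans hs₁s
  have hms₂ : m < s₂ := by rw [hm]; linarith
  have hsm : s < m := hmid
  have hc₀ : 0 < (s₂ - s₁) / 2 / (2 * s) := div_pos (by linarith) (by linarith)
  set c₀ := (s₂ - s₁) / 2 / (2 * s) with hc₀def
  set g : ℝ → ℝ := fun l => c₀ * Real.exp ((m - s) * Real.sqrt l - (m - s) * (m + s) / 2)
    with hg
  have key : ∀ l : ℝ, z₂ ≤ l →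
      g l ≤ (ncChiSqCDF l z₂ - ncChiSqCDF l z₁) / ncChiSqCDF l z := by
    intro l hl
    set t := Real.sqrt l with ht
    have hts₂ : s₂ ≤ t := Real.sqrt_le_sqrt hl
    have ht0 : 0 ≤ t - s₂ := by linarith
    -- denominator
    have hD : ncChiSqCDF l z = ∫ x in Set.Ioc (t - s) (t + s), stdNormalPDF x :=
      stdNormalCDF_sub _ _ (by linarith)
    have hDpos : 0 < ncChiSqCDF l z := by
      rw [hD]
      calc (0 : ℝ) < (t + s - (t - s)) * stdNormalPDF (t + s) := by
            have := stdNormalPDF_pos (t + s); nlinarith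
        _ ≤ _ := le_intIoc _ _ (by linarith) (by linarith)
    have hDle : ncChiSqCDF l z ≤ 2 * s * stdNormalPDF (t - s) := by
      rw [hD]
      have := intIoc_le (t - s) (t + s) (by linarith) (by linarith)
      calc (∫ x in Set.Ioc (t - s) (t + s), stdNormalPDF x)
          ≤ (t + s - (t - s)) * stdNormalPDF (t - s) := this
        _ = 2 * s * stdNormalPDF (t - s) := by ring_nf
    -- numerator
    have hN : (s₂ - s₁) / 2 * stdNormalPDF (t - m) ≤
        ncChiSqCDF l z₂ - ncChiSqCDF l z₁ := by
      have e1 : ncChiSqCDF l z₂ - ncChiSqCDF l z₁ =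
          (stdNormalCDF (t + s₂) - stdNormalCDF (t + s₁)) +
          (stdNormalCDF (t - s₁) - stdNormalCDF (t - s₂)) := by
        unfold ncChiSqCDF; rw [← ht, ← hs₁, ← hs₂]; ring
      have e2 : 0 ≤ stdNormalCDF (t + s₂) - stdNormalCDF (t + s₁) :=
        sub_nonneg.mpr (stdNormalCDF_mono (by linarith))
      have e3 : 0 ≤ stdNormalCDF (t - s₁) - stdNormalCDF (t - m) :=
        sub_nonneg.mpr (stdNormalCDF_mono (by linarith))
      have e4 : (s₂ - s₁) / 2 * stdNormalPDF (t - m) ≤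
          stdNormalCDF (t - m) - stdNormalCDF (t - s₂) := by
        rw [stdNormalCDF_sub _ _ (by linarith)]
        have := le_intIoc (t - s₂) (t - m) ht0 (by linarith)
        calc (s₂ - s₁) / 2 * stdNormalPDF (t - m)
            = (t - m - (t - s₂)) * stdNormalPDF (t - m) := by rw [hm]; ring_nf
          _ ≤ _ := this
      linarith
    -- combine
    have hNpos : 0 < (s₂ - s₁) / 2 * stdNormalPDF (t - m) := by
      have := stdNormalPDF_pos (t - m); nlinarith
    have hstep : ((s₂ - s₁) / 2 * stdNormalPDF (t - m)) / (2 * s * stdNormalPDF (t - s))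
        ≤ (ncChiSqCDF l z₂ - ncChiSqCDF l z₁) / ncChiSqCDF l z :=
      div_le_div₀ (hNpos.le.trans hN) hN hDpos hDle
    refine le_trans (le_of_eq ?_) hstep
    have hk : Real.sqrt (2 * Real.pi) ≠ 0 :=
      (Real.sqrt_pos.mpr (by positivity)).ne'
    have he : Real.exp (-((t - s) ^ 2) / 2) ≠ 0 := (Real.exp_pos _).ne'
    have hsne : s ≠ 0 := hspos.ne'
    unfold stdNormalPDF
    simp only [hg]
    rw [← ht, hc₀def,
      show (-((t - m) ^ 2) / 2 : ℝ) =
        ((m - s) * t - (m - s) * (m + s) / 2) + -((t - s) ^ 2) / 2 by ring,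
      Real.exp_add]
    field_simp
  have hgt : Tendsto g atTop atTop := by
    have h1' : Tendsto (fun l : ℝ => (m - s) * Real.sqrt l - (m - s) * (m + s) / 2)
        atTop atTop :=
      tendsto_atTop_add_const_right _ _
        ((tendsto_const_mul_atTop_of_pos (by linarith : 0 < m - s)).2 tendsto_sqrt_atTop')
    rw [hg]
    exact (tendsto_const_mul_atTop_of_pos hc₀).2 (Real.tendsto_exp_atTop.comp h1')
  have hmain : Tendsto (fun l : ℝ => (ncChiSqCDF l z₂ - ncChiSqCDF l z₁) / ncChiSqCDF l z)
      atTop atTop :=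
    tendsto_atTop_mono' atTop
      (by filter_upwards [eventually_ge_atTop z₂] with l hl using key l hl) hgt
  refine ⟨hmain, fun C hC => ?_⟩
  obtain ⟨l, hl1, hl2⟩ :=
    ((hmain.eventually_gt_atTop C).and (eventually_ge_atTop (0 : ℝ))).exists
  exact absurd (hC l hl2) (not_le.mpr hl1)
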